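/- The second marginal of a joint quantum state is obtained by state transformation along the extracted channel: Let τ be a quantum state on ℂ^n ⊗ ℂ^m (a positive semidefinite trace-1 matrix indexed by Fin n × Fin m) such that proj(τ) is positive definite. Then M₂(τ) = extr(τ) ≫ proj(τ), i.e. for all k, ℓ ∈ Fin m: ∑_i τ (i,k) (i,ℓ) = tr(extr(τ) ℓ k * proj(τ)). -/

import Mathlib

open Matrix
open scoped ComplexOrder

noncomputable section

/-- The square root of a positive semidefinite matrix, as defined in the older Mathlib. -/
def Matrix.PosSemidef.sqrt {n : Type*} [Fintype n] [DecidableEq n] {𝕜 : Type*} [RCLike 𝕜]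
    {A : Matrix n n 𝕜} (hA : A.PosSemidef) : Matrix n n 𝕜 :=
  (hA.1.eigenvectorUnitary : Matrix n n 𝕜) * diagonal ((↑) ∘ (√·) ∘ hA.1.eigenvalues) *
    (star (hA.1.eigenvectorUnitary : Matrix n n 𝕜))

/-- Transpose of the first marginal of a joint quantum state. -/
def qproj {n m : ℕ} (τ : Matrix (Fin n × Fin m) (Fin n × Fin m) ℂ) :
    Matrix (Fin n) (Fin n) ℂ :=
  Matrix.of fun i j => ∑ k, τ (j, k) (i, k)

/-- Channel extracted from a joint quantum state. -/
def qextr {n m : ℕ} (τ : Matrix (Fin n × Fin m) (Fin n × Fin m) ℂ)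
    (h : (qproj τ).PosDef) : Fin m → Fin m → Matrix (Fin n) (Fin n) ℂ :=
  fun k ℓ => ∑ i, ∑ j, (starRingEnd ℂ) (τ (i, k) (j, ℓ))
    • ((h.posSemidef.sqrt)⁻¹ * Matrix.single i j 1 * (h.posSemidef.sqrt)⁻¹)

/-!
With `S = √(proj τ)`, the matrix `extr(τ) ℓ k * proj τ` is a combination of the matrices
`S⁻¹ * E i j * S⁻¹ * (S * S)`, each similar to `E i j` and hence of trace `δ i j`. The trace
thus collapses to `∑ i, conj (τ (i, ℓ) (i, k))`, which is `∑ i, τ (i, k) (i, ℓ)` as `τ` is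
Hermitian.
-/

theorem Matrix.PosSemidef.sqrt_mul_self {ι 𝕜 : Type*} [Fintype ι] [DecidableEq ι] [RCLike 𝕜]
    {A : Matrix ι ι 𝕜} (hA : A.PosSemidef) : hA.sqrt * hA.sqrt = A := by
  set U : Matrix ι ι 𝕜 := (hA.1.eigenvectorUnitary : Matrix ι ι 𝕜)
  set D : Matrix ι ι 𝕜 := diagonal ((↑) ∘ (√·) ∘ hA.1.eigenvalues)
  have hU : star U * U = 1 := Unitary.coe_star_mul_self _
  have hD : D * D = diagonal ((↑) ∘ hA.1.eigenvalues) := by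
    rw [diagonal_mul_diagonal]
    congr 1
    funext i
    simp only [Function.comp_apply, ← RCLike.ofReal_mul,
      Real.mul_self_sqrt (hA.eigenvalues_nonneg i)]
  calc hA.sqrt * hA.sqrt = U * D * (star U * U) * D * star U := by
        simp only [Matrix.PosSemidef.sqrt, U, D, Matrix.mul_assoc]
    _ = U * diagonal ((↑) ∘ hA.1.eigenvalues) * star U := by
        rw [hU, Matrix.mul_one, Matrix.mul_assoc U D D, hD]
    _ = A := by
        conv_rhs => rw [hA.1.spectral_theorem, Unitary.conjStarAlgAut_apply]

theorem Matrix.PosDef.isUnit_sqrt {ι 𝕜 : Type*} [Fintype ι] [DecidableEq ι] [RCLike 𝕜]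
    {A : Matrix ι ι 𝕜} (hA : A.PosDef) : IsUnit hA.posSemidef.sqrt :=
  isUnit_of_mul_isUnit_left (hA.posSemidef.sqrt_mul_self ▸ hA.isUnit)

theorem Matrix.trace_inv_mul_mul_inv_mul_of_mul_self_eq {ι R : Type*} [Fintype ι]
    [DecidableEq ι] [CommRing R] {S P : Matrix ι ι R} (hS : IsUnit S) (hSP : S * S = P)
    (X : Matrix ι ι R) : (S⁻¹ * X * S⁻¹ * P).trace = X.trace := by
  have hdet : IsUnit S.det := (isUnit_iff_isUnit_det S).mp hS
  calc (S⁻¹ * X * S⁻¹ * P).trace = (S⁻¹ * (X * S)).trace := by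
        subst hSP
        simp only [Matrix.mul_assoc, nonsing_inv_mul_cancel_left S _ hdet]
    _ = X.trace := by
        rw [trace_mul_comm, Matrix.mul_assoc, mul_nonsing_inv S hdet, Matrix.mul_one]

theorem trace_qextr_mul_qproj {n m : ℕ} (τ : Matrix (Fin n × Fin m) (Fin n × Fin m) ℂ)
    (h : (qproj τ).PosDef) (k ℓ : Fin m) :
    (qextr τ h k ℓ * qproj τ).trace = ∑ i, (starRingEnd ℂ) (τ (i, k) (i, ℓ)) := by
  simp only [qextr, Finset.sum_mul, smul_mul_assoc, trace_sum, trace_smul,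
    trace_inv_mul_mul_inv_mul_of_mul_self_eq h.isUnit_sqrt h.posSemidef.sqrt_mul_self,
    smul_eq_mul]
  refine Finset.sum_congr rfl fun i _ => ?_
  rw [Finset.sum_eq_single i (fun j _ hji => by rw [trace_single_eq_of_ne i j _ hji.symm, mul_zero])
    (by simp), trace_single_eq_same, mul_one]

theorem second_marginal_extr_general {n m : ℕ}
    (τ : Matrix (Fin n × Fin m) (Fin n × Fin m) ℂ)
    (hτ : τ.PosSemidef)
    (hproj : (qproj τ).PosDef) :
    ∀ k ℓ : Fin m, (∑ i, τ (i, k) (i, ℓ)) = (qextr τ hproj ℓ k * qproj τ).trace := by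
  intro k ℓ
  rw [trace_qextr_mul_qproj]
  exact Finset.sum_congr rfl fun i _ => (hτ.isHermitian.apply (i, k) (i, ℓ)).symm

/-- The second marginal of a joint quantum state is obtained by state
transformation along the extracted channel: `M₂(τ) = extr(τ) ≫ proj(τ)`. -/
theorem second_marginal_extr {n m : ℕ}
    (τ : Matrix (Fin n × Fin m) (Fin n × Fin m) ℂ)
    (hτ : τ.PosSemidef) (hτtr : τ.trace = 1)
    (hproj : (qproj τ).PosDef) :
    ∀ k ℓ : Fin m, (∑ i, τ (i, k) (i, ℓ)) = (qextr τ hproj ℓ k * qproj τ).trace :=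
  second_marginal_extr_general τ hτ hproj
end
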